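/- arXiv:1405.7033 — 2 statements merged into one kernel-verified Lean document; each statement's English description precedes it below -/
import Mathlib

section
/- Let n ≥ 1 and let y_1 ≥ y_2 ≥ ⋯ ≥ y_n ≥ 0 be real numbers. Let (c_1, …, c_n) be any sequence obtained by interleaving, in some order, the two weight sequences (n−1, n−3, …, n+1−2j) and (n−1, n−3, …, n+1−2(n−j)) for some 0 ≤ j ≤ n (each weight used with its multiplicity from the two sequences). Then Σ_i c_i y_i ≤ (n−1)(y_1+y_2) + (n−3)(y_3+y_4) + ⋯, i.e. the maximum over all such interleavings and all j is attained at j = ⌊n/2⌋ pairing equal weights with consecutive y's; consequently Σ_{i=1}^n 2(n+1−i) y_i − 2 Σ_i c_i y_i ≥ 2(y_1 + y_3 + y_5 + ⋯) ≥ 0, with equality iff all y_i = 0. -/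
/-! Write `dᵢ = n - 1 - 2⌊(i - 1)/2⌋`. Any `k` of the weights `c` consist of `a` terms of one
progression and `k - a` of the other, so their sum is at most `a(n - a) + (k - a)(n - k + a)`,
the sum of the largest available terms; this is concave in `a` and maximal at `a = ⌊k/2⌋`, where
it equals `d₁ + ⋯ + d_k`. Abel summation against the decreasing nonnegative `y` turns these prefix
inequalities into `Σ cᵢ yᵢ ≤ Σ dᵢ yᵢ`. Finally `2(n + 1 - i) - 2dᵢ` is `2` for odd `i` and `0` for
even `i`, and `y₂ₜ ≤ y₂ₜ₋₁` gives the equality case. -/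

open Finset

theorem Antitone.sum_le_sum_range_card {M : Type*} [AddCommMonoid M] [PartialOrder M]
    [IsOrderedAddMonoid M] {f : ℕ → M} (hf : Antitone f) (s : Finset ℕ) :
    ∑ m ∈ s, f m ≤ ∑ m ∈ range #s, f m := by
  induction s using Finset.induction_on_max with
  | empty => simp
  | insert a s hlt ih =>
    have ha : a ∉ s := fun h => (hlt a h).false
    have hcard : #s ≤ a := by
      simpa using card_le_card (fun x hx => mem_range.2 (hlt x hx) : s ⊆ range a)
    rw [sum_insert ha, card_insert_of_notMem ha, sum_range_succ, add_comm]
    exact add_le_add ih (hf hcard)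

theorem Multiset.exists_eq_map_finset_of_le_map {β : Type*} {f : ℕ → β}
    (hf : Function.Injective f) {T : Multiset β} {s : Finset ℕ} (hT : T ≤ s.val.map f) :
    ∃ t ⊆ s, T = t.val.map f := by
  classical
  have hnd : (s.val.map f).Nodup := s.nodup.map hf
  refine ⟨s.filter (fun m => f m ∈ T), filter_subset _ _, ?_⟩
  rw [Multiset.Nodup.ext (Multiset.nodup_of_le hT hnd) ((s.filter _).nodup.map hf)]
  intro b
  simp only [Multiset.mem_map, Finset.mem_val, Finset.mem_filter]
  constructor
  · intro hb
    obtain ⟨m, hm, rfl⟩ := Multiset.mem_map.1 (Multiset.subset_of_le hT hb)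
    exact ⟨m, ⟨hm, hb⟩, rfl⟩
  · rintro ⟨m, ⟨-, hm⟩, rfl⟩
    exact hm

theorem StrictAnti.multiset_sum_le_of_le_map_range {f : ℕ → ℝ} (hf : StrictAnti f)
    {T : Multiset ℝ} {p : ℕ} (hT : T ≤ (range p).val.map f) :
    T.sum ≤ ∑ m ∈ range (Multiset.card T), f m := by
  obtain ⟨t, -, rfl⟩ := Multiset.exists_eq_map_finset_of_le_map hf.injective hT
  simpa using hf.antitone.sum_le_sum_range_card t

theorem Multiset.exists_le_le_of_le_add {α : Type*} [DecidableEq α] {T A B : Multiset α}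
    (h : T ≤ A + B) : ∃ T₁ T₂, T₁ ≤ A ∧ T₂ ≤ B ∧ T = T₁ + T₂ :=
  ⟨T ∩ A, T - A, Multiset.inter_le_right, Multiset.sub_le_iff_le_add.2 (by rwa [add_comm]),
    by rw [add_comm, Multiset.sub_add_inter]⟩

theorem Nat.half_sq_add_sq_le (a b : ℕ) :
    ((a + b) / 2) ^ 2 + (a + b - (a + b) / 2) ^ 2 ≤ a ^ 2 + b ^ 2 := by
  rcases Nat.even_or_odd' (a + b) with ⟨s, h | h⟩
  · rw [h, show 2 * s / 2 = s by omega, show 2 * s - s = s by omega]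
    nlinarith [sq_nonneg ((a : ℤ) - b)]
  · rw [h, show (2 * s + 1) / 2 = s by omega, show 2 * s + 1 - s = s + 1 by omega]
    have : (a : ℤ) ≠ b := by omega
    have : 1 ≤ ((a : ℤ) - b) ^ 2 := by
      rcases lt_or_gt_of_ne this with h' | h' <;> nlinarith
    zify at h ⊢
    nlinarith

theorem sum_range_sub_two_mul (x : ℝ) (a : ℕ) :
    ∑ m ∈ range a, (x - 2 * m) = a * (x + 1 - a) := by
  induction a with
  | zero => simp
  | succ a ih => rw [sum_range_succ, ih]; push_cast; ring

theorem sum_range_sub_two_mul_add_le_balanced (x : ℝ) (a b : ℕ) :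
    ∑ m ∈ range a, (x - 2 * m) + ∑ m ∈ range b, (x - 2 * m)
      ≤ ∑ m ∈ range ((a + b) / 2), (x - 2 * m)
        + ∑ m ∈ range (a + b - (a + b) / 2), (x - 2 * m) := by
  have hsq : (((a + b) / 2 : ℕ) : ℝ) ^ 2 + ((a + b - (a + b) / 2 : ℕ) : ℝ) ^ 2
      ≤ a ^ 2 + b ^ 2 := by
    exact_mod_cast Nat.half_sq_add_sq_le a b
  have hsum : (((a + b) / 2 : ℕ) : ℝ) + ((a + b - (a + b) / 2 : ℕ) : ℝ) = a + b := by
    rw [← Nat.cast_add, Nat.add_sub_cancel' (Nat.div_le_self _ _), Nat.cast_add]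
  simp only [sum_range_sub_two_mul]
  linear_combination hsq - (x + 1) * hsum

theorem sum_Icc_sub_two_mul_half (x : ℝ) (k : ℕ) :
    ∑ i ∈ Icc 1 k, (x - 2 * ((i - 1) / 2 : ℕ))
      = ∑ m ∈ range (k / 2), (x - 2 * m) + ∑ m ∈ range (k - k / 2), (x - 2 * m) := by
  induction k with
  | zero => simp
  | succ k ih =>
    rw [sum_Icc_succ_top (by omega), ih, Nat.add_sub_cancel]
    rcases Nat.even_or_odd' k with ⟨s, rfl | rfl⟩
    · rw [show (2 * s + 1) / 2 = s by omega, show 2 * s + 1 - s = s + 1 by omega,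
        show 2 * s / 2 = s by omega, show 2 * s - s = s by omega, sum_range_succ]
      ring
    · rw [show (2 * s + 1 + 1) / 2 = s + 1 by omega,
        show 2 * s + 1 + 1 - (s + 1) = s + 1 by omega, show (2 * s + 1) / 2 = s by omega,
        show 2 * s + 1 - s = s + 1 by omega, sum_range_succ]
      ring

theorem multiset_sum_le_sum_Icc_of_le_add (x : ℝ) {T : Multiset ℝ} {p q : ℕ}
    (hT : T ≤ (range p).val.map (fun m : ℕ => x - 2 * m)
      + (range q).val.map (fun m : ℕ => x - 2 * m)) :
    T.sum ≤ ∑ i ∈ Icc 1 (Multiset.card T), (x - 2 * ((i - 1) / 2 : ℕ)) := by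
  have hf : StrictAnti (fun m : ℕ => x - 2 * m) := fun a b hab => by
    have : (a : ℝ) < b := by exact_mod_cast hab
    linarith
  obtain ⟨T₁, T₂, h₁, h₂, rfl⟩ := Multiset.exists_le_le_of_le_add hT
  calc (T₁ + T₂).sum
      ≤ ∑ m ∈ range (Multiset.card T₁), (x - 2 * m)
        + ∑ m ∈ range (Multiset.card T₂), (x - 2 * m) := by
        rw [Multiset.sum_add]
        exact add_le_add (hf.multiset_sum_le_of_le_map_range h₁)
          (hf.multiset_sum_le_of_le_map_range h₂)
    _ ≤ _ := sum_range_sub_two_mul_add_le_balanced x _ _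
    _ = _ := by rw [sum_Icc_sub_two_mul_half, Multiset.card_add]

section SummationByParts

variable {R : Type*} [CommRing R]

theorem sum_Icc_mul_eq_sum_Ico_add (e y : ℕ → R) (n : ℕ) :
    ∑ i ∈ Icc 1 n, e i * y i
      = ∑ k ∈ Ico 1 n, (∑ i ∈ Icc 1 k, e i) * (y k - y (k + 1))
        + (∑ i ∈ Icc 1 n, e i) * y n := by
  induction n with
  | zero => simp
  | succ n ih =>
    rcases Nat.eq_zero_or_pos n with rfl | hn
    · simp
    rw [sum_Icc_succ_top (by omega), ih, sum_Ico_succ_top hn, sum_Icc_succ_top (by omega)]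
    ring

theorem sum_mul_le_sum_mul_of_sum_Icc_le [LinearOrder R] [IsStrictOrderedRing R]
    {c d y : ℕ → R} {n : ℕ}
    (hcd : ∀ k ≤ n, ∑ i ∈ Icc 1 k, c i ≤ ∑ i ∈ Icc 1 k, d i)
    (hy : ∀ i, 1 ≤ i → i < n → y (i + 1) ≤ y i) (hy₀ : ∀ i ∈ Icc 1 n, 0 ≤ y i) :
    ∑ i ∈ Icc 1 n, c i * y i ≤ ∑ i ∈ Icc 1 n, d i * y i := by
  rcases Nat.eq_zero_or_pos n with rfl | hn
  · simp
  have he : ∀ k ≤ n, 0 ≤ ∑ i ∈ Icc 1 k, (d i - c i) := fun k hk => by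
    rw [sum_sub_distrib, sub_nonneg]
    exact hcd k hk
  rw [← sub_nonneg, ← sum_sub_distrib]
  simp_rw [← sub_mul]
  rw [sum_Icc_mul_eq_sum_Ico_add]
  refine add_nonneg (sum_nonneg fun k hk => ?_)
    (mul_nonneg (he n le_rfl) (hy₀ n (mem_Icc.2 ⟨hn, le_rfl⟩)))
  obtain ⟨hk₁, hk₂⟩ := mem_Ico.1 hk
  exact mul_nonneg (he k hk₂.le) (sub_nonneg.2 (hy k hk₁ hk₂))

end SummationByParts

theorem two_mul_add_one_sub_eq (x : ℝ) {i : ℕ} (hi : 1 ≤ i) :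
    2 * (x + 1 - i) = 2 * (x - 1 - 2 * ((i - 1) / 2 : ℕ)) + if Odd i then 2 else 0 := by
  rcases Nat.even_or_odd' i with ⟨t, rfl | rfl⟩
  · obtain ⟨s, rfl⟩ : ∃ s, t = s + 1 := ⟨t - 1, by omega⟩
    rw [if_neg (by simp [Nat.not_odd_iff_even]), show (2 * (s + 1) - 1) / 2 = s by omega]
    push_cast
    ring
  · rw [if_pos (odd_two_mul_add_one t), show (2 * t + 1 - 1) / 2 = t by omega]
    push_cast
    ring

theorem sum_Icc_two_mul_add_one_sub_mul (x : ℝ) (y : ℕ → ℝ) (n : ℕ) :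
    ∑ i ∈ Icc 1 n, 2 * (x + 1 - i) * y i
      = 2 * ∑ i ∈ Icc 1 n, (x - 1 - 2 * ((i - 1) / 2 : ℕ)) * y i
        + 2 * ∑ i ∈ (Icc 1 n).filter Odd, y i := by
  rw [sum_filter, mul_sum, mul_sum, ← sum_add_distrib]
  refine sum_congr rfl fun i hi => ?_
  rw [two_mul_add_one_sub_eq x (mem_Icc.1 hi).1]
  split_ifs <;> ring

theorem sum_filter_odd_eq_zero_iff {y : ℕ → ℝ} {n : ℕ}
    (hy : ∀ i, 1 ≤ i → i < n → y (i + 1) ≤ y i) (hy₀ : ∀ i ∈ Icc 1 n, 0 ≤ y i) :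
    ∑ i ∈ (Icc 1 n).filter Odd, y i = 0 ↔ ∀ i ∈ Icc 1 n, y i = 0 := by
  rw [sum_eq_zero_iff_of_nonneg fun i hi => hy₀ i (mem_filter.1 hi).1]
  refine ⟨fun h i hi => ?_, fun h i hi => h i (mem_filter.1 hi).1⟩
  obtain ⟨hi₁, hi₂⟩ := mem_Icc.1 hi
  rcases Nat.even_or_odd' i with ⟨t, rfl | rfl⟩
  · have hprev : y (2 * t - 1) = 0 :=
      h _ (mem_filter.2 ⟨mem_Icc.2 ⟨by omega, by omega⟩, ⟨t - 1, by omega⟩⟩)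
    have hle : y (2 * t - 1 + 1) ≤ y (2 * t - 1) := hy _ (by omega) (by omega)
    rw [show 2 * t - 1 + 1 = 2 * t by omega] at hle
    linarith [hy₀ _ hi]
  · exact h _ (mem_filter.2 ⟨hi, odd_two_mul_add_one t⟩)

theorem stmt8_general (n : ℕ) (y : ℕ → ℝ)
    (hdec : ∀ i, 1 ≤ i → i < n → y (i + 1) ≤ y i)
    (hnonneg : ∀ i ∈ Finset.Icc 1 n, 0 ≤ y i)
    (j : ℕ) (c : ℕ → ℝ)
    (hc : (Finset.Icc 1 n).val.map c
        = (Finset.range j).val.map (fun m => ((n : ℝ) - 1 - 2 * m))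
          + (Finset.range (n - j)).val.map (fun m => ((n : ℝ) - 1 - 2 * m))) :
    (∑ i ∈ Finset.Icc 1 n, c i * y i)
      ≤ ∑ i ∈ Finset.Icc 1 n, ((n : ℝ) - 1 - 2 * (((i - 1) / 2 : ℕ))) * y i ∧
    2 * (∑ i ∈ (Finset.Icc 1 n).filter (fun i => Odd i), y i)
      ≤ (∑ i ∈ Finset.Icc 1 n, (2 * ((n : ℝ) + 1 - i)) * y i)
          - 2 * (∑ i ∈ Finset.Icc 1 n, c i * y i) ∧
    0 ≤ 2 * (∑ i ∈ (Finset.Icc 1 n).filter (fun i => Odd i), y i) ∧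
    (2 * (∑ i ∈ (Finset.Icc 1 n).filter (fun i => Odd i), y i) = 0
      ↔ ∀ i ∈ Finset.Icc 1 n, y i = 0) := by
  -- `hc` elaborates with `(range j).val` coerced to `Multiset ℝ` and the map taken over `ℝ`.
  have hcast : ∀ p : ℕ, (range p).val.map (fun m => ((n : ℝ) - 1 - 2 * m))
      = (range p).val.map (fun m : ℕ => ((n : ℝ) - 1 - 2 * m)) := fun p => by
    simp only [Multiset.pure_def, Multiset.bind_def, Multiset.bind_singleton, Multiset.map_map,
      Function.comp_def]
  have hprefix : ∀ k ≤ n,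
      ∑ i ∈ Icc 1 k, c i ≤ ∑ i ∈ Icc 1 k, ((n : ℝ) - 1 - 2 * (((i - 1) / 2 : ℕ))) := by
    intro k hk
    have hT : (Icc 1 k).val.map c ≤ (Icc 1 n).val.map c :=
      Multiset.map_le_map (val_le_iff.2 (Icc_subset_Icc_right hk))
    rw [hc, hcast, hcast] at hT
    simpa using multiset_sum_le_sum_Icc_of_le_add _ hT
  have hmajor := sum_mul_le_sum_mul_of_sum_Icc_le hprefix hdec hnonneg
  have hweights := sum_Icc_two_mul_add_one_sub_mul (n : ℝ) y n
  have hodd : 0 ≤ ∑ i ∈ (Icc 1 n).filter Odd, y i :=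
    sum_nonneg fun i hi => hnonneg i (mem_filter.1 hi).1
  refine ⟨hmajor, by linarith, mul_nonneg zero_le_two hodd, ?_⟩
  · rw [mul_eq_zero, or_iff_right two_ne_zero]
    exact sum_filter_odd_eq_zero_iff hdec hnonneg

/-- K-smallness verification for `GL_n(ℝ) ⊂ Sp_{2n}(ℝ)`.  Let `y 1 ≥ ⋯ ≥ y n ≥ 0` and let
`c : ℕ → ℝ` be any interleaving (in some order) of the two weight sequences
`(n−1, n−3, …, n+1−2j)` and `(n−1, n−3, …, n+1−2(n−j))` for some `0 ≤ j ≤ n`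
(i.e. the multiset of values `c 1, …, c n` is the union of the two arithmetic sequences).
Then `Σᵢ cᵢ yᵢ ≤ (n−1)(y₁+y₂) + (n−3)(y₃+y₄) + ⋯`, and consequently
`Σ_{i=1}^n 2(n+1−i) yᵢ − 2 Σᵢ cᵢ yᵢ ≥ 2(y₁+y₃+y₅+⋯) ≥ 0`, with
`2(y₁+y₃+⋯) = 0` iff all `yᵢ = 0`. -/
theorem stmt8 (n : ℕ) (hn : 1 ≤ n) (y : ℕ → ℝ)
    (hdec : ∀ i, 1 ≤ i → i < n → y (i + 1) ≤ y i)
    (hnonneg : ∀ i ∈ Finset.Icc 1 n, 0 ≤ y i)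
    (j : ℕ) (hj : j ≤ n) (c : ℕ → ℝ)
    (hc : (Finset.Icc 1 n).val.map c
        = (Finset.range j).val.map (fun m => ((n : ℝ) - 1 - 2 * m))
          + (Finset.range (n - j)).val.map (fun m => ((n : ℝ) - 1 - 2 * m))) :
    (∑ i ∈ Finset.Icc 1 n, c i * y i)
      ≤ ∑ i ∈ Finset.Icc 1 n, ((n : ℝ) - 1 - 2 * (((i - 1) / 2 : ℕ))) * y i ∧
    2 * (∑ i ∈ (Finset.Icc 1 n).filter (fun i => Odd i), y i)
      ≤ (∑ i ∈ Finset.Icc 1 n, (2 * ((n : ℝ) + 1 - i)) * y i)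
          - 2 * (∑ i ∈ Finset.Icc 1 n, c i * y i) ∧
    0 ≤ 2 * (∑ i ∈ (Finset.Icc 1 n).filter (fun i => Odd i), y i) ∧
    (2 * (∑ i ∈ (Finset.Icc 1 n).filter (fun i => Odd i), y i) = 0
      ↔ ∀ i ∈ Finset.Icc 1 n, y i = 0) :=
  stmt8_general n y hdec hnonneg j c hc
end

section
/- Let F/ℚ_p be a finite unramified extension with ring of integers O and Galois group Γ = Gal(F/ℚ_p). Let G be a split reductive group scheme over ℤ_p with split maximal torus T, and let H ⊆ G be a split reductive ℤ_p-subgroup scheme with maximal torus T_H ⊆ T, both having reductive special fibers. Let y ∈ G(O) and L = ⋂_{σ∈Γ} σ(yH y^{-1}) (intersection of Galois conjugates, a subgroup of G over ℚ_p). If μ ∈ X_*(T) is such that the Weyl orbit Wμ does not intersect X_*(T_H), then L(ℚ_p) ∩ G(ℤ_p) μ(p) G(ℤ_p) = ∅. -/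
/-- Abstract form of the building-avoidance lemma.  Inside the group `G = G(F)` of points
over an unramified extension `F/ℚ_p` with Galois group `Γ`, let `K = G(O)`, `H = H(F)`,
`Gp = G(ℚ_p)` (the `Γ`-fixed points) and `KH = H(O) = H ⊓ K`.  Assume the Cartan
decomposition for `H`: every `x ∈ H` lies in `KH·ν(π)·KH` for some cocharacter
`ν ∈ X_*(T_H)`, and uniqueness of the Cartan decomposition in `G` up to the Weyl
group `W`.  Let `y ∈ K = G(O)` and `L = ⋂_{σ∈Γ} σ(yHy⁻¹) ∩ Gp`.  If `μ ∈ X_*(T)` is such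
that the Weyl orbit `Wμ` does not meet `X_*(T_H)`, then
`L(ℚ_p) ∩ G(ℤ_p) μ(p) G(ℤ_p) = ∅`. -/
theorem stmt14 {G : Type*} [Group G] (K H Gp : Subgroup G)
    {X : Type*} [AddCommGroup X] (XH : AddSubgroup X)
    {W : Type*} [Group W] [DistribMulAction W X]
    (emb : X → G)
    (hCartanH : ∀ x ∈ H, ∃ ν ∈ XH, ∃ k₁ ∈ H ⊓ K, ∃ k₂ ∈ H ⊓ K,
      x = k₁ * emb ν * k₂)
    (huniq : ∀ μ ν : X,
      (∃ k₁ ∈ K, ∃ k₂ ∈ K, ∃ l₁ ∈ K, ∃ l₂ ∈ K,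
        k₁ * emb μ * k₂ = l₁ * emb ν * l₂) → ∃ w : W, w • μ = ν)
    {Γ : Type*} [Group Γ] (act : Γ →* MulAut G)
    (hGp : ∀ g : G, g ∈ Gp ↔ ∀ σ : Γ, act σ g = g)
    (y : G) (hy : y ∈ K)
    (L : Set G)
    (hL : L = {g : G | g ∈ Gp ∧ ∀ σ : Γ, (act σ)⁻¹ g ∈ (fun h => y * h * y⁻¹) '' (H : Set G)})
    (μ : X) (hμ : ∀ w : W, w • μ ∉ XH) :
    ¬ ∃ g ∈ L, ∃ k₁ ∈ Gp ⊓ K, ∃ k₂ ∈ Gp ⊓ K, g = k₁ * emb μ * k₂ := by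
  rintro ⟨g, hgL, k₁, hk₁, k₂, hk₂, hg⟩
  rw [hL] at hgL
  obtain ⟨-, hconj⟩ := hgL
  obtain ⟨x, hxH, hx⟩ := hconj 1
  simp only [map_one, inv_one, MulAut.one_apply] at hx
  obtain ⟨ν, hνXH, h₁, hh₁, h₂, hh₂, hxdec⟩ := hCartanH x hxH
  have key : ∃ w : W, w • μ = ν := by
    apply huniq
    refine ⟨k₁, hk₁.2, k₂, hk₂.2, y * h₁, mul_mem hy hh₁.2, h₂ * y⁻¹,
      mul_mem hh₂.2 (inv_mem hy), ?_⟩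
    rw [← hg, ← hx, hxdec]
    group
  obtain ⟨w, hw⟩ := key
  exact hμ w (hw ▸ hνXH)
end
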